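/- Let z = |z| e^{iω} with 1/2 ≤ |z| < 1. Then for all real θ, φ, |P_z(θ) - P_z(φ)| ≤ 2 (|θ-ω| + |φ-ω|) |θ-φ| / (1-|z|)³, where P_z is the Poisson kernel. -/

import Mathlib

open MeasureTheory Set

noncomputable section

def unitDisk : Set ℂ := {z : ℂ | ‖z‖ < 1}

def carlesonSquare (a b : ℝ) : Set ℂ :=
  {z : ℂ | ∃ r t : ℝ, a ≤ t ∧ t ≤ b ∧ 1 - (b - a) / (2 * Real.pi) ≤ r ∧ r < 1 ∧
    z = (r : ℂ) * Complex.exp (t * Complex.I)}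

/-- `μ` is an `s`-Carleson measure. -/
def IsCarleson (μ : Measure ℂ) (s : ℝ) : Prop :=
  ∃ C > 0, ∀ a b : ℝ, a < b → b - a ≤ 2 * Real.pi →
    (μ (carlesonSquare a b)).toReal ≤ C * (b - a) ^ s

/-- Poisson kernel `P_z(θ)`. -/
def diskPoissonKernel (z : ℂ) (θ : ℝ) : ℝ :=
  (1 - ‖z‖ ^ 2) / ‖1 - z * Complex.exp (-(θ * Complex.I))‖ ^ 2

/-- The balayage `S_μ(e^{it})`. -/
def balayage (μ : Measure ℂ) (t : ℝ) : ℝ :=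
  ∫ z in unitDisk, diskPoissonKernel z t ∂μ

/-- The hyperbolic metric `β(z,w)`. -/
def hypDist (z w : ℂ) : ℝ :=
  (1 / 2) * Real.log ((1 + ‖(z - w) / (1 - (starRingEnd ℂ) z * w)‖) /
    (1 - ‖(z - w) / (1 - (starRingEnd ℂ) z * w)‖))

/-- Normalized area measure `dA` on `ℂ` (so that the unit disk has measure 1). -/
def areaM : Measure ℂ := (ENNReal.ofReal Real.pi)⁻¹ • MeasureTheory.volume

/-- The B-balayage `G_μ`. -/
def bBalayage (μ : Measure ℂ) (z : ℂ) : ℝ :=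
  ∫ w in unitDisk, (1 - ‖w‖ ^ 2) ^ 2 /
    ‖1 - (starRingEnd ℂ) z * w‖ ^ 4 ∂μ


/-! In polar form `P_z(θ) = (1 - r²) / D(θ)` with `D(θ) = (1 - r)² + 4 r sin²((θ - ω)/2) ≥ (1 - r)²`,
so a difference of two values of `P_z` costs `(1 - r²) |D(θ) - D(φ)| / (1 - r)⁴`. The factor
`sin² a - sin² b = (sin a - sin b)(sin a + sin b)` of `D(θ) - D(φ)` is at most `|a - b| (|a| + |b|)`
because `sin` is `1`-Lipschitz and `|sin a| ≤ |a|`. -/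

open Real

lemma abs_sin_sq_sub_sin_sq_le (a b : ℝ) :
    |sin a ^ 2 - sin b ^ 2| ≤ |a - b| * (|a| + |b|) := by
  rw [sq_sub_sq, abs_mul, mul_comm]
  exact mul_le_mul (abs_sin_sub_sin_le a b)
    ((abs_add_le _ _).trans (add_le_add abs_sin_le_abs abs_sin_le_abs)) (abs_nonneg _)
    (abs_nonneg _)

lemma abs_sin_sq_half_sub_sin_sq_half_le (ω θ φ : ℝ) :
    |sin ((θ - ω) / 2) ^ 2 - sin ((φ - ω) / 2) ^ 2| ≤ (|θ - ω| + |φ - ω|) * |θ - φ| / 4 := by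
  have h := abs_sin_sq_sub_sin_sq_le ((θ - ω) / 2) ((φ - ω) / 2)
  rw [show (θ - ω) / 2 - (φ - ω) / 2 = (θ - φ) / 2 by ring, abs_div, abs_div, abs_div,
    abs_two] at h
  linarith

lemma abs_div_sub_div_le_of_le {c m x y : ℝ} (hc : 0 ≤ c) (hm : 0 < m) (hx : m ≤ x)
    (hy : m ≤ y) : |c / x - c / y| ≤ c * |x - y| / m ^ 2 := by
  have hx₀ : 0 < x := hm.trans_le hx
  have hy₀ : 0 < y := hm.trans_le hy
  rw [div_sub_div _ _ hx₀.ne' hy₀.ne', show c * y - x * c = c * (y - x) by ring, abs_div,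
    abs_mul, abs_of_nonneg hc, abs_of_pos (mul_pos hx₀ hy₀), abs_sub_comm, sq]
  gcongr

lemma norm_one_sub_ofReal_mul_exp_sq (r t : ℝ) :
    ‖1 - r * Complex.exp (t * Complex.I)‖ ^ 2 = (1 - r) ^ 2 + 4 * r * sin (t / 2) ^ 2 := by
  rw [Complex.sq_norm, Complex.normSq_apply]
  simp only [Complex.sub_re, Complex.sub_im, Complex.one_re, Complex.one_im, Complex.re_ofReal_mul,
    Complex.im_ofReal_mul, Complex.exp_ofReal_mul_I_re, Complex.exp_ofReal_mul_I_im]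
  rw [sin_sq_eq_half_sub, mul_div_cancel₀ t two_ne_zero]
  linear_combination r ^ 2 * sin_sq_add_cos_sq t

lemma diskPoissonKernel_ofReal_mul_exp {r : ℝ} (hr : 0 ≤ r) (ω θ : ℝ) :
    diskPoissonKernel (r * Complex.exp (ω * Complex.I)) θ =
      (1 - r ^ 2) / ((1 - r) ^ 2 + 4 * r * sin ((θ - ω) / 2) ^ 2) := by
  have hz : ‖(r : ℂ) * Complex.exp (ω * Complex.I)‖ = r := by
    rw [norm_mul, Complex.norm_exp_ofReal_mul_I, Complex.norm_real, norm_of_nonneg hr, mul_one]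
  have hexp : (r : ℂ) * Complex.exp (ω * Complex.I) * Complex.exp (-(θ * Complex.I)) =
      r * Complex.exp ((ω - θ : ℝ) * Complex.I) := by
    rw [mul_assoc, ← Complex.exp_add]
    push_cast
    ring_nf
  rw [diskPoissonKernel, hz, hexp, norm_one_sub_ofReal_mul_exp_sq,
    show (ω - θ) / 2 = -((θ - ω) / 2) by ring, sin_neg, neg_sq]

/-- For z = r e^{iω} with 1/2 ≤ r < 1,
|P_z(θ) - P_z(φ)| ≤ 2 (|θ-ω| + |φ-ω|) |θ-φ| / (1-r)³. -/
theorem poissonKernel_diff_bound (r ω θ φ : ℝ) (h1 : 1 / 2 ≤ r) (h2 : r < 1) :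
    |diskPoissonKernel ((r : ℂ) * Complex.exp (ω * Complex.I)) θ -
      diskPoissonKernel ((r : ℂ) * Complex.exp (ω * Complex.I)) φ| ≤
      2 * ((|θ - ω| + |φ - ω|) * |θ - φ|) / (1 - r) ^ 3 := by
  have hr : 0 ≤ r := by linarith
  have hr' : 0 < 1 - r := by linarith
  set S := (|θ - ω| + |φ - ω|) * |θ - φ|
  set D : ℝ → ℝ := fun t ↦ (1 - r) ^ 2 + 4 * r * sin ((t - ω) / 2) ^ 2
  have hD : ∀ t, (1 - r) ^ 2 ≤ D t := fun t ↦ le_add_of_nonneg_right (by positivity)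
  have hDdiff : |D θ - D φ| ≤ r * S := by
    rw [show D θ - D φ = 4 * r * (sin ((θ - ω) / 2) ^ 2 - sin ((φ - ω) / 2) ^ 2) by ring,
      abs_mul, abs_of_nonneg (by positivity : 0 ≤ 4 * r)]
    linarith [mul_le_mul_of_nonneg_left (abs_sin_sq_half_sub_sin_sq_half_le ω θ φ)
      (by positivity : 0 ≤ 4 * r)]
  calc _ = |(1 - r ^ 2) / D θ - (1 - r ^ 2) / D φ| := by
        rw [diskPoissonKernel_ofReal_mul_exp hr, diskPoissonKernel_ofReal_mul_exp hr]
    _ ≤ (1 - r ^ 2) * |D θ - D φ| / ((1 - r) ^ 2) ^ 2 :=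
        abs_div_sub_div_le_of_le (by nlinarith) (by positivity) (hD θ) (hD φ)
    _ ≤ (1 - r ^ 2) * (r * S) / ((1 - r) ^ 2) ^ 2 := by
        gcongr
        nlinarith
    _ = (1 + r) * r * S / (1 - r) ^ 3 := by
        field_simp
        ring
    _ ≤ 2 * S / (1 - r) ^ 3 := by
        gcongr
        nlinarith
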